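/- arXiv:2407.02134 — 8 statements merged into one kernel-verified Lean document; each statement's English description precedes it below -/
import Mathlib

section
/- Let (M, ⊥) be a separoid and let X_1, …, X_n, Y ∈ M. Then the following statements are equivalent: (1) X_1, …, X_n are mutually independent given Y; (2) for all i = 1, …, n one has X_i ⊥ X_{[i−1]} | Y; (3) X_1, …, X_{n−1} are mutually independent given Y and X_n ⊥ X_{[n−1]} | Y; (4) for all disjoint subsets I_1, I_2 ⊆ [n] one has X_{I_1} ⊥ X_{I_2} | Y. -/
namespace AMRF
/-- The separoid axioms (S1)–(S5) for a ternary relation `ind X Y Z` (read `X ⊥ Y | Z`)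
on a commutative idempotent monoid. -/
def IsSeparoid {M : Type*} [CommMonoid M] (ind : M → M → M → Prop) : Prop :=
  (∀ X Y Z : M, ind X Y Z → ind Y X Z) ∧
  (∀ W Y Z : M, W * Z = Z → ind W Y Z) ∧
  (∀ W X Y Z : M, ind (W * X) Y Z → ind X Y Z) ∧
  (∀ W X Y Z : M, ind (W * X) Y Z → ind W Y (X * Z)) ∧
  (∀ W X Y Z : M, ind W Y (X * Z) → ind X Y Z → ind (W * X) Y Z)

section aux
variable {M : Type*} [CommMonoid M] (ind : M → M → M → Prop) (hsep : IsSeparoid ind)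
  (X : ℕ → M) (Y : M)
include hsep

/-- (1)-style hypothesis implies (2)-style: drop the elements above `i`. -/
lemma one_to_two (n : ℕ) (h : ∀ i ∈ Finset.range n,
    ind (X i) (∏ j ∈ (Finset.range n).erase i, X j) Y) :
    ∀ i ∈ Finset.range n, ind (X i) (∏ j ∈ Finset.range i, X j) Y := by
  intro i hi
  have hi' := Finset.mem_range.mp hi
  have hsub : Finset.range i ⊆ (Finset.range n).erase i := by
    intro j hj
    simp only [Finset.mem_range] at hj
    simp only [Finset.mem_erase, Finset.mem_range]
    omega
  have hprod := Finset.prod_sdiff (f := X) hsub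
  have h1 := hsep.1 _ _ _ (h i hi)
  rw [← hprod] at h1
  exact hsep.1 _ _ _ (hsep.2.2.1 _ _ _ _ h1)

/-- (2) implies (4). -/
lemma two_to_four (n : ℕ) (h : ∀ i ∈ Finset.range n,
    ind (X i) (∏ j ∈ Finset.range i, X j) Y) :
    ∀ I₁ I₂ : Finset ℕ, I₁ ⊆ Finset.range n → I₂ ⊆ Finset.range n → Disjoint I₁ I₂ →
      ind (∏ j ∈ I₁, X j) (∏ j ∈ I₂, X j) Y := by
  suffices H : ∀ k ≤ n, ∀ I₁ I₂ : Finset ℕ, I₁ ⊆ Finset.range k → I₂ ⊆ Finset.range k →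
      Disjoint I₁ I₂ → ind (∏ j ∈ I₁, X j) (∏ j ∈ I₂, X j) Y from H n le_rfl
  intro k
  induction k with
  | zero =>
    intro _ I₁ I₂ h1 h2 _
    have e1 : I₁ = ∅ := Finset.subset_empty.mp (by simpa using h1)
    have e2 : I₂ = ∅ := Finset.subset_empty.mp (by simpa using h2)
    subst e1; subst e2
    simpa using hsep.2.1 1 1 Y (one_mul Y)
  | succ k IH =>
    intro hk I₁ I₂ h1 h2 hdisj
    have IH' := IH (le_of_lt hk)
    have h2k : ind (X k) (∏ j ∈ Finset.range k, X j) Y :=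
      h k (Finset.mem_range.mpr hk)
    -- main case: k ∈ I₁
    have main : ∀ I₁ I₂ : Finset ℕ, I₁ ⊆ Finset.range (k + 1) → I₂ ⊆ Finset.range (k + 1) →
        Disjoint I₁ I₂ → k ∈ I₁ → ind (∏ j ∈ I₁, X j) (∏ j ∈ I₂, X j) Y := by
      intro I₁ I₂ h1 h2 hdisj hk1
      set I₁' := I₁.erase k with hI₁'
      have hkI₂ : k ∉ I₂ := fun hmem => (Finset.disjoint_left.mp hdisj hk1) hmem
      have hI₁sub : I₁' ⊆ Finset.range k := by
        intro j hj
        have := Finset.mem_erase.mp hj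
        have := Finset.mem_range.mp (h1 this.2)
        simp only [Finset.mem_range]
        rcases Finset.mem_erase.mp hj with ⟨hne, hmem⟩
        have := Finset.mem_range.mp (h1 hmem); omega
      have hI₂sub : I₂ ⊆ Finset.range k := by
        intro j hj
        have hjn := Finset.mem_range.mp (h2 hj)
        have : j ≠ k := fun e => hkI₂ (e ▸ hj)
        simp only [Finset.mem_range]; omega
      have hdisj' : Disjoint I₁' I₂ := Finset.disjoint_of_subset_left (Finset.erase_subset _ _) hdisj
      have hUsub : I₁' ∪ I₂ ⊆ Finset.range k := Finset.union_subset hI₁sub hI₂sub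
      have hprod : (∏ j ∈ Finset.range k \ (I₁' ∪ I₂), X j) *
          ((∏ j ∈ I₁', X j) * ∏ j ∈ I₂, X j) = ∏ j ∈ Finset.range k, X j := by
        rw [← Finset.prod_union hdisj']
        exact Finset.prod_sdiff hUsub
      have s1 : ind ((∏ j ∈ Finset.range k \ (I₁' ∪ I₂), X j) *
          ((∏ j ∈ I₁', X j) * ∏ j ∈ I₂, X j)) (X k) Y := by
        rw [hprod]; exact hsep.1 _ _ _ h2k
      have s2 : ind ((∏ j ∈ I₁', X j) * ∏ j ∈ I₂, X j) (X k) Y :=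
        hsep.2.2.1 _ _ _ _ s1
      have s2' : ind ((∏ j ∈ I₂, X j) * ∏ j ∈ I₁', X j) (X k) Y := by
        rwa [mul_comm] at s2
      have s3 : ind (∏ j ∈ I₂, X j) (X k) ((∏ j ∈ I₁', X j) * Y) :=
        hsep.2.2.2.1 _ _ _ _ s2'
      have s4 : ind (X k) (∏ j ∈ I₂, X j) ((∏ j ∈ I₁', X j) * Y) := hsep.1 _ _ _ s3
      have s5 : ind (∏ j ∈ I₁', X j) (∏ j ∈ I₂, X j) Y := IH' _ _ hI₁sub hI₂sub hdisj'
      have s6 : ind (X k * ∏ j ∈ I₁', X j) (∏ j ∈ I₂, X j) Y :=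
        hsep.2.2.2.2 _ _ _ _ s4 s5
      rwa [Finset.mul_prod_erase _ _ hk1] at s6
    by_cases hk1 : k ∈ I₁
    · exact main I₁ I₂ h1 h2 hdisj hk1
    by_cases hk2 : k ∈ I₂
    · exact hsep.1 _ _ _ (main I₂ I₁ h2 h1 hdisj.symm hk2)
    have h1' : I₁ ⊆ Finset.range k := by
      intro j hj
      have := Finset.mem_range.mp (h1 hj)
      have : j ≠ k := fun e => hk1 (e ▸ hj)
      simp only [Finset.mem_range]
      have := Finset.mem_range.mp (h1 hj); omega
    have h2' : I₂ ⊆ Finset.range k := by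
      intro j hj
      have : j ≠ k := fun e => hk2 (e ▸ hj)
      have := Finset.mem_range.mp (h2 hj)
      simp only [Finset.mem_range]; omega
    exact IH' _ _ h1' h2' hdisj

end aux

/-- In a separoid `(M, ⊥)`, for `X₁, …, X_n, Y ∈ M` (indices `0, …, n−1`),
the following are equivalent: (1) mutual independence given `Y`;
(2) `Xᵢ ⊥ X_{[i−1]} | Y` for every `i`; (3) mutual independence of the first `n−1` elements
given `Y` together with `X_n ⊥ X_{[n−1]} | Y`; (4) `X_{I₁} ⊥ X_{I₂} | Y` for all disjoint
`I₁, I₂ ⊆ [n]`. -/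
theorem mutual_independence_characterization
    {M : Type*} [CommMonoid M] (hidem : ∀ x : M, x * x = x)
    (ind : M → M → M → Prop) (hsep : IsSeparoid ind)
    (n : ℕ) (hn : 1 ≤ n) (X : ℕ → M) (Y : M) :
    List.TFAE
      [ ∀ i ∈ Finset.range n, ind (X i) (∏ j ∈ (Finset.range n).erase i, X j) Y,
        ∀ i ∈ Finset.range n, ind (X i) (∏ j ∈ Finset.range i, X j) Y,
        (∀ i ∈ Finset.range (n - 1),
            ind (X i) (∏ j ∈ (Finset.range (n - 1)).erase i, X j) Y) ∧
          ind (X (n - 1)) (∏ j ∈ Finset.range (n - 1), X j) Y,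
        ∀ I₁ I₂ : Finset ℕ, I₁ ⊆ Finset.range n → I₂ ⊆ Finset.range n → Disjoint I₁ I₂ →
          ind (∏ j ∈ I₁, X j) (∏ j ∈ I₂, X j) Y ] := by
  tfae_have 1 → 2 := one_to_two ind hsep X Y n
  tfae_have 2 → 4 := two_to_four ind hsep X Y n
  tfae_have 4 → 1 := by
    intro h4 i hi
    have := h4 {i} ((Finset.range n).erase i) (by simpa using hi)
      (Finset.erase_subset _ _) (by simp)
    simpa using this
  tfae_have 4 → 3 := by
    intro h4
    constructor
    · intro i hi
      have hi' := Finset.mem_range.mp hi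
      have hsub1 : ({i} : Finset ℕ) ⊆ Finset.range n := by
        simp only [Finset.singleton_subset_iff, Finset.mem_range]; omega
      have hsub2 : (Finset.range (n - 1)).erase i ⊆ Finset.range n := by
        intro j hj
        rcases Finset.mem_erase.mp hj with ⟨_, hj⟩
        have := Finset.mem_range.mp hj
        simp only [Finset.mem_range]; omega
      have := h4 {i} _ hsub1 hsub2 (by simp)
      simpa using this
    · have hsub1 : ({n - 1} : Finset ℕ) ⊆ Finset.range n := by
        simp only [Finset.singleton_subset_iff, Finset.mem_range]; omega
      have hsub2 : Finset.range (n - 1) ⊆ Finset.range n :=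
        Finset.range_subset_range.mpr (by omega)
      have hdisj : Disjoint ({n - 1} : Finset ℕ) (Finset.range (n - 1)) := by
        simp
      have := h4 {n - 1} _ hsub1 hsub2 hdisj
      simpa using this
  tfae_have 3 → 2 := by
    rintro ⟨h3a, h3b⟩ i hi
    have hi' := Finset.mem_range.mp hi
    rcases lt_or_ge i (n - 1) with hlt | hge
    · exact one_to_two ind hsep X Y (n - 1) h3a i (Finset.mem_range.mpr hlt)
    · have : i = n - 1 := by omega
      subst this; exact h3b
  tfae_finish


end AMRF
end

section
/- Let (M, ⊥) be a separoid, G = (V, E) a graph with vertex set V = [n], and X_1, …, X_n ∈ M. Then X_1, …, X_n form a Markov random field with respect to ⊥ and G (i.e. satisfy the global Markov property) if and only if they satisfy the cutset property with respect to ⊥ and G. -/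
namespace AMRF
/-- The graph `G − U`: keep only edges with both endpoints outside `U`. -/
def delGraph {V : Type*} (G : SimpleGraph V) (U : Finset V) : SimpleGraph V where
  Adj a b := G.Adj a b ∧ a ∉ U ∧ b ∉ U
  symm := ⟨fun _ _ h => ⟨h.1.symm, h.2.2, h.2.1⟩⟩
  loopless := ⟨fun a h => G.loopless.irrefl a h.1⟩

/-- `C` separates `A` from `B` in `G`: every walk from a vertex of `A` to a vertex of `B`
passes through some vertex of `C`. -/
def Separates {V : Type*} (G : SimpleGraph V) (A B C : Finset V) : Prop :=
  ∀ a ∈ A, ∀ b ∈ B, ∀ w : G.Walk a b, ∃ c ∈ C, c ∈ w.support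

/-- `U` is a cutset: `G − U` has more than one connected component. -/
def IsCutset {V : Type*} (G : SimpleGraph V) (U : Finset V) : Prop :=
  ∃ v w : V, v ∉ U ∧ w ∉ U ∧ ¬ (delGraph G U).Reachable v w

/-- `C` is (the vertex set of) a connected component of `G − U`. -/
def IsCompOf {V : Type*} (G : SimpleGraph V) (U C : Finset V) : Prop :=
  ∃ v, v ∉ U ∧ ∀ w, w ∈ C ↔ (delGraph G U).Reachable v w

/-- The global Markov property: `X₁, …, X_n` form a Markov random field with respect to the
independence relation `ind` and the graph `Gr`. -/
def IsMRF {M : Type*} [CommMonoid M] {n : ℕ} (ind : M → M → M → Prop)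
    (Gr : SimpleGraph (Fin n)) (X : Fin n → M) : Prop :=
  ∀ A B C : Finset (Fin n), Disjoint A B → Disjoint A C → Disjoint B C →
    Separates Gr A B C →
    ind (∏ a ∈ A, X a) (∏ b ∈ B, X b) (∏ c ∈ C, X c)

/-- The cutset property: for every cutset `U` of `Gr`, the elements `X_{V₁(U)}, …, X_{V_s(U)}`
corresponding to the components of `Gr − U` are mutually independent given `X_U`
(each component is independent of the product of all other components given `X_U`). -/
def CutsetProperty {M : Type*} [CommMonoid M] {n : ℕ} (ind : M → M → M → Prop)
    (Gr : SimpleGraph (Fin n)) (X : Fin n → M) : Prop :=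
  ∀ U : Finset (Fin n), IsCutset Gr U →
    ∀ C : Finset (Fin n), IsCompOf Gr U C →
      ind (∏ i ∈ C, X i) (∏ i ∈ (Finset.univ \ U) \ C, X i) (∏ i ∈ U, X i)

/-!
Forward direction: a component of `G − U` is separated by `U` from the rest of `V ∖ U`, so the
global Markov property applies directly. Backward direction: if `C` separates nonempty `A` and
`B`, then `C` is a cutset; let `A'` be the union of the components of `G − C` meeting `A`.
Removing the components of `A'` one at a time, contraction turns the independence of each single
component from everything else into `X_{A'} ⊥ X_{V ∖ (A' ∪ C)} | X_C`, and decomposition shrinks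
`A'` to `A` and `V ∖ (A' ∪ C)` to `B`.
-/

open Finset SimpleGraph

namespace IsSeparoid

variable {M : Type*} [CommMonoid M] {ind : M → M → M → Prop} {W X Y Z : M}

theorem symm (h : IsSeparoid ind) : ind X Y Z → ind Y X Z := h.1 X Y Z

theorem one_left (h : IsSeparoid ind) : ind 1 Y Z := h.2.1 1 Y Z (one_mul Z)

theorem one_right (h : IsSeparoid ind) : ind X 1 Z := h.symm h.one_left

theorem decomp (h : IsSeparoid ind) : ind (W * X) Y Z → ind X Y Z := h.2.2.1 W X Y Z

theorem weak_union (h : IsSeparoid ind) : ind (W * X) Y Z → ind W Y (X * Z) := h.2.2.2.1 W X Y Z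

theorem contraction (h : IsSeparoid ind) : ind W Y (X * Z) → ind X Y Z → ind (W * X) Y Z :=
  h.2.2.2.2 W X Y Z

theorem mul_left_of_ind_mul_right (h : IsSeparoid ind) (hW : ind W (Y * X) Z)
    (hX : ind X (Y * W) Z) : ind (W * X) Y Z := by
  rw [mul_comm Y W] at hX
  exact h.contraction (h.symm (h.weak_union (h.symm hW))) (h.symm (h.decomp (h.symm hX)))

theorem prod_mono {ι : Type*} [DecidableEq ι] (h : IsSeparoid ind) {f : ι → M}
    {A B S T : Finset ι} (hAS : A ⊆ S) (hBT : B ⊆ T)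
    (hST : ind (∏ i ∈ S, f i) (∏ i ∈ T, f i) Z) : ind (∏ i ∈ A, f i) (∏ i ∈ B, f i) Z := by
  rw [← prod_sdiff hAS, ← prod_sdiff hBT] at hST
  exact h.symm (h.decomp (h.symm (h.decomp hST)))

end IsSeparoid

section Graph

variable {V : Type*} {G : SimpleGraph V} {U A B C S K : Finset V} {a b : V}

theorem delGraph_le : delGraph G U ≤ G := fun _ _ h => h.1

theorem notMem_of_mem_support_delGraph (p : (delGraph G U).Walk a b) (ha : a ∉ U) {x : V}
    (hx : x ∈ p.support) : x ∉ U := by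
  induction p with
  | nil => rwa [List.mem_singleton.1 hx]
  | cons hadj p ih =>
    rcases List.mem_cons.1 (Walk.support_cons _ _ ▸ hx) with rfl | hx
    · exact ha
    · exact ih hadj.2.2 hx

theorem notMem_of_reachable_delGraph (h : (delGraph G U).Reachable a b) (ha : a ∉ U) :
    b ∉ U :=
  h.elim fun p => notMem_of_mem_support_delGraph p ha p.end_mem_support

theorem reachable_delGraph_of_walk (p : G.Walk a b) (hp : ∀ x ∈ p.support, x ∉ U) :
    (delGraph G U).Reachable a b := by
  induction p with
  | nil => rfl
  | cons hadj p ih =>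
    have hadj' : (delGraph G U).Adj _ _ :=
      ⟨hadj, hp _ (Walk.start_mem_support _), hp _ (by simp)⟩
    exact hadj'.reachable.trans (ih fun x hx => hp x (by simp [hx]))

theorem reachable_delGraph_iff (ha : a ∉ U) :
    (delGraph G U).Reachable a b ↔ ∃ p : G.Walk a b, ∀ x ∈ p.support, x ∉ U := by
  refine ⟨fun ⟨p⟩ => ⟨p.mapLe delGraph_le, ?_⟩, fun ⟨p, hp⟩ => reachable_delGraph_of_walk p hp⟩
  rw [Walk.support_mapLe_eq_support]
  exact fun x hx => notMem_of_mem_support_delGraph p ha hx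

theorem separates_iff (hA : Disjoint A C) :
    Separates G A B C ↔ ∀ a ∈ A, ∀ b ∈ B, ¬ (delGraph G C).Reachable a b := by
  refine forall₂_congr fun a ha => forall₂_congr fun b _ => ?_
  rw [reachable_delGraph_iff (disjoint_left.1 hA ha)]
  push Not
  exact forall_congr' fun p => ⟨fun ⟨c, hc, hcp⟩ => ⟨c, hcp, hc⟩, fun ⟨c, hcp, hc⟩ => ⟨c, hc, hcp⟩⟩

theorem Separates.isCutset (h : Separates G A B C) (hA : Disjoint A C) (hB : Disjoint B C)
    (ha : a ∈ A) (hb : b ∈ B) : IsCutset G C :=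
  ⟨a, b, disjoint_left.1 hA ha, disjoint_left.1 hB hb, (separates_iff hA).1 h a ha b hb⟩

/-- `S` is a union of components of `G − U`. -/
def IsCompUnion (G : SimpleGraph V) (U S : Finset V) : Prop :=
  Disjoint S U ∧ ∀ v ∈ S, ∀ w, (delGraph G U).Reachable v w → w ∈ S

theorem IsCompOf.isCompUnion (hC : IsCompOf G U C) : IsCompUnion G U C := by
  obtain ⟨v, hv, hC⟩ := hC
  exact ⟨disjoint_left.2 fun w hw => notMem_of_reachable_delGraph ((hC w).1 hw) hv,
    fun u hu w huw => (hC w).2 (((hC u).1 hu).trans huw)⟩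

theorem IsCompUnion.sdiff [DecidableEq V] (hS : IsCompUnion G U S) (hK : IsCompUnion G U K) :
    IsCompUnion G U (S \ K) := by
  refine ⟨hS.1.mono_left sdiff_subset, fun v hv w hvw => ?_⟩
  rw [mem_sdiff] at hv ⊢
  exact ⟨hS.2 v hv.1 w hvw, fun hw => hv.2 (hK.2 w hw v hvw.symm)⟩

theorem IsCompUnion.separates (hS : IsCompUnion G U S) (hB : Disjoint S B) :
    Separates G S B U :=
  (separates_iff hS.1).2 fun _ ha _ hb hab => disjoint_left.1 hB (hS.2 _ ha _ hab) hb

variable [Fintype V]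

open Classical in
noncomputable def reachSet (G : SimpleGraph V) (U A : Finset V) : Finset V :=
  univ.filter fun w => ∃ a ∈ A, (delGraph G U).Reachable a w

theorem mem_reachSet {w : V} : w ∈ reachSet G U A ↔ ∃ a ∈ A, (delGraph G U).Reachable a w := by
  simp [reachSet]

theorem subset_reachSet : A ⊆ reachSet G U A := fun a ha => mem_reachSet.2 ⟨a, ha, .refl a⟩

theorem isCompUnion_reachSet (hA : Disjoint A U) : IsCompUnion G U (reachSet G U A) := by
  refine ⟨disjoint_left.2 fun w hw => ?_, fun v hv w hvw => ?_⟩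
  · obtain ⟨a, ha, haw⟩ := mem_reachSet.1 hw
    exact notMem_of_reachable_delGraph haw (disjoint_left.1 hA ha)
  · obtain ⟨a, ha, hav⟩ := mem_reachSet.1 hv
    exact mem_reachSet.2 ⟨a, ha, hav.trans hvw⟩

theorem isCompOf_reachSet_singleton {v : V} (hv : v ∉ U) : IsCompOf G U (reachSet G U {v}) :=
  ⟨v, hv, fun w => by simp [mem_reachSet]⟩

theorem IsCompUnion.reachSet_subset (hS : IsCompUnion G U S) (hA : A ⊆ S) :
    reachSet G U A ⊆ S := fun w hw => by
  obtain ⟨a, ha, haw⟩ := mem_reachSet.1 hw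
  exact hS.2 a (hA ha) w haw

theorem Separates.subset_sdiff_reachSet [DecidableEq V] (h : Separates G A B C)
    (hA : Disjoint A C) (hB : Disjoint B C) : B ⊆ (univ \ C) \ reachSet G C A := fun b hb => by
  refine mem_sdiff.2 ⟨mem_sdiff.2 ⟨mem_univ b, disjoint_left.1 hB hb⟩, fun hb' => ?_⟩
  obtain ⟨a, ha, hab⟩ := mem_reachSet.1 hb'
  exact (separates_iff hA).1 h a ha b hb hab

end Graph

theorem CutsetProperty.ind_of_isCompUnion {M : Type*} [CommMonoid M]
    {ind : M → M → M → Prop} {n : ℕ} {Gr : SimpleGraph (Fin n)} {X : Fin n → M}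
    (hcut : CutsetProperty ind Gr X) (hsep : IsSeparoid ind) {U S : Finset (Fin n)}
    (hU : IsCutset Gr U) (hS : IsCompUnion Gr U S) :
    ind (∏ i ∈ S, X i) (∏ i ∈ (univ \ U) \ S, X i) (∏ i ∈ U, X i) := by
  induction S using Finset.strongInduction with
  | H S ih =>
  obtain rfl | ⟨v, hv⟩ := S.eq_empty_or_nonempty
  · simpa using hsep.one_left
  have hvU : v ∉ U := disjoint_left.1 hS.1 hv
  set K := reachSet Gr U {v}
  have hK : IsCompUnion Gr U K := isCompUnion_reachSet (disjoint_singleton_left.2 hvU)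
  have hKS : K ⊆ S := hS.reachSet_subset (singleton_subset_iff.2 hv)
  have hSP : S ⊆ univ \ U := subset_sdiff.2 ⟨subset_univ S, hS.1⟩
  have hrest := ih (S \ K) (sdiff_ssubset hKS ⟨v, subset_reachSet (mem_singleton_self v)⟩)
    (hS.sdiff hK)
  have hcomp := hcut U hU K (isCompOf_reachSet_singleton hvU)
  rw [sdiff_sdiff_eq_sdiff_union (hKS.trans hSP),
    prod_union (sdiff_disjoint.mono_right hKS)] at hrest
  rw [← sdiff_union_sdiff_cancel hSP hKS, prod_union (sdiff_disjoint.mono_right sdiff_subset)]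
    at hcomp
  rw [← prod_sdiff hKS]
  exact hsep.mul_left_of_ind_mul_right hrest hcomp

theorem mrf_iff_cutset_property_general
    {M : Type*} [CommMonoid M]
    (ind : M → M → M → Prop) (hsep : IsSeparoid ind)
    (n : ℕ) (Gr : SimpleGraph (Fin n)) (X : Fin n → M) :
    IsMRF ind Gr X ↔ CutsetProperty ind Gr X := by
  refine ⟨fun hmrf U _ C hC => ?_, fun hcut A B C _ hAC hBC hABC => ?_⟩
  · have hCU := hC.isCompUnion
    exact hmrf _ _ _ disjoint_sdiff hCU.1 (sdiff_disjoint.mono_left sdiff_subset)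
      (hCU.separates disjoint_sdiff)
  · obtain rfl | ⟨a, ha⟩ := A.eq_empty_or_nonempty
    · simpa using hsep.one_left
    obtain rfl | ⟨b, hb⟩ := B.eq_empty_or_nonempty
    · simpa using hsep.one_right
    have hA' := hcut.ind_of_isCompUnion hsep (hABC.isCutset hAC hBC ha hb)
      (isCompUnion_reachSet hAC)
    exact hsep.prod_mono subset_reachSet (hABC.subset_sdiff_reachSet hAC hBC) hA'

/-- In a separoid, `X₁, …, X_n` form a Markov random field with respect to
`⊥` and a graph `Gr` on `[n]` (global Markov property) if and only if they satisfy the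
cutset property. -/
theorem mrf_iff_cutset_property
    {M : Type*} [CommMonoid M] (hidem : ∀ x : M, x * x = x)
    (ind : M → M → M → Prop) (hsep : IsSeparoid ind)
    (n : ℕ) (Gr : SimpleGraph (Fin n)) (X : Fin n → M) :
    IsMRF ind Gr X ↔ CutsetProperty ind Gr X :=
  mrf_iff_cutset_property_general ind hsep n Gr X

end AMRF
end

section
/- Let M be a commutative idempotent monoid acting additively on an abelian group G and let F : M → G satisfy the chain rule. Fix X_1, …, X_n ∈ M. Then there exists a G-valued measure F̂ : 2^Σ → G on the set Σ of atoms such that for all q ≥ 1 and all subsets J, L_1, …, L_q ⊆ [n] the Hu identity holds: X_J.F_q(X_{L_1}; …; X_{L_q}) = F̂(⋂_{k=1}^q Σ_{L_k} ∖ Σ_J). -/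
/-!
Möbius inversion on the Boolean lattice of subsets of `[n]` produces an additive `F̂` with
`F̂(Σ_K) = F(X_K)` for every `K ⊆ [n]`. Idempotence gives `X_J X_L = X_{J ∪ L}`, so the chain
rule reads `X_J.F(X_L) = F̂(Σ_{J ∪ L}) − F̂(Σ_J) = F̂(Σ_L ∖ Σ_J)`, the case `q = 1`. The recursion
`X_J.F_{q+1}(…; X_L) = X_J.F_q(…) − X_{J ∪ L}.F_q(…)` then matches, for `B = ⋂_{k ≤ q} Σ_{L_k}`,
`F̂(B ∖ Σ_J) − F̂(B ∖ Σ_{J ∪ L}) = F̂((B ∩ Σ_L) ∖ Σ_J)`.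
-/

namespace AMRF
/-- An additive monoid action of a commutative monoid `M` on an abelian group `G`. -/
structure MAction (M G : Type*) [CommMonoid M] [AddCommGroup G] where
  act : M → G → G
  act_one : ∀ g, act 1 g = g
  act_mul : ∀ X Y g, act X (act Y g) = act (X * Y) g
  act_add : ∀ X g h, act X (g + h) = act X g + act X h

variable {M G : Type*} [CommMonoid M] [AddCommGroup G]

/-- `F : M → G` satisfies the chain rule `F(XY) = F(X) + X.F(Y)`. -/
def ChainRule (A : MAction M G) (F : M → G) : Prop :=
  ∀ X Y : M, F (X * Y) = F X + A.act X (F Y)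

/-- Higher-order terms on a *reversed* argument list: the head of the list is the *last*
argument `Y_q` in `F_q(Y₁; …; Y_q)`. -/
def Fseq (A : MAction M G) (F : M → G) : List M → G
  | [] => 0
  | [Y] => F Y
  | Y :: Z :: l => Fseq A F (Z :: l) - A.act Y (Fseq A F (Z :: l))

/-- `Fof A F [Y₁, …, Y_q] = F_q(Y₁; …; Y_q)`, defined inductively by
`F_q(Y₁; …; Y_q) = F_{q−1}(Y₁; …; Y_{q−1}) − Y_q.F_{q−1}(Y₁; …; Y_{q−1})`. -/
def Fof (A : MAction M G) (F : M → G) (l : List M) : G :=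
  Fseq A F l.reverse

/-- The interaction term `F(;_{i∈I} X_i)`, with arguments in increasing index order. -/
def Fint (A : MAction M G) (F : M → G) {ι : Type*} [LinearOrder ι] (X : ι → M)
    (I : Finset ι) : G :=
  Fof A F ((I.sort (· ≤ ·)).map X)

/-- The `F`-independence relation: `X ⊥_F Y | Z` iff `Z.F(X; Y) = 0`, where
`F(X; Y) = F(X) − Y.F(X)` is the second-order term. -/
def Findep (A : MAction M G) (F : M → G) (X Y Z : M) : Prop :=
  A.act Z (F X - A.act Y (F X)) = 0
/-- The atoms `p_I`, indexed by nonempty subsets `I ⊆ [n]`. -/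
def Atom (n : ℕ) := {I : Finset (Fin n) // I.Nonempty}

/-- `Σ_L = ⋃_{i ∈ L} Σ_i`: the set of atoms `p_I` with `I ∩ L ≠ ∅`. -/
def circles {n : ℕ} (L : Finset (Fin n)) : Set (Atom n) :=
  {p | ∃ i ∈ L, i ∈ p.1}

/-- A `G`-valued measure on subsets of atoms: additive over disjoint unions. -/
def IsMeasure {G : Type*} [AddCommGroup G] {n : ℕ} (Fhat : Set (Atom n) → G) : Prop :=
  ∀ S T : Set (Atom n), Disjoint S T → Fhat (S ∪ T) = Fhat S + Fhat T

/-- The Hu identity for `Fhat` with respect to `X₁, …, X_n`: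
`X_J.F_q(X_{L₁}; …; X_{L_q}) = F̂(⋂ₖ Σ_{Lₖ} ∖ Σ_J)`. -/
def HuIdentity (A : MAction M G) (F : M → G) {n : ℕ} (X : Fin n → M)
    (Fhat : Set (Atom n) → G) : Prop :=
  ∀ q : ℕ, 1 ≤ q → ∀ (J : Finset (Fin n)) (L : Fin q → Finset (Fin n)),
    A.act (∏ j ∈ J, X j) (Fof A F (List.ofFn fun k => ∏ i ∈ L k, X i)) =
      Fhat ((⋂ k : Fin q, circles (L k)) \ circles J)

theorem MAction.act_sub (A : MAction M G) (X : M) (g h : G) :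
    A.act X (g - h) = A.act X g - A.act X h :=
  (AddMonoidHom.mk' (A.act X) (A.act_add X)).map_sub g h

theorem ChainRule.map_one {A : MAction M G} {F : M → G} (hF : ChainRule A F) : F 1 = 0 := by
  simpa [A.act_one] using hF 1 1

theorem Fof_singleton (A : MAction M G) (F : M → G) (Y : M) : Fof A F [Y] = F Y := rfl

theorem Fof_append_singleton (A : MAction M G) (F : M → G) {l : List M} (hl : l ≠ []) (Y : M) :
    Fof A F (l ++ [Y]) = Fof A F l - A.act Y (Fof A F l) := by
  obtain ⟨Z, t, hZt⟩ := List.exists_cons_of_ne_nil (List.reverse_ne_nil_iff.mpr hl)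
  simp only [Fof, List.reverse_append, List.reverse_singleton, List.singleton_append, hZt]
  rfl

theorem prod_mul_prod_of_idempotent {ι : Type*} [DecidableEq ι]
    (hidem : ∀ x : M, x * x = x) (X : ι → M) (s t : Finset ι) :
    (∏ i ∈ s, X i) * ∏ i ∈ t, X i = ∏ i ∈ s ∪ t, X i := by
  rw [← Finset.prod_union_inter, ← Finset.prod_sdiff Finset.inter_subset_union, mul_assoc,
    ← Finset.prod_mul_distrib, Finset.prod_congr rfl fun i _ => hidem (X i)]

open IncidenceAlgebra in
theorem sum_Iic_sum_Iic_mu_smul {α : Type*} [PartialOrder α] [OrderBot α]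
    [LocallyFiniteOrder α] [DecidableEq α] (g : α → G) (x : α) :
    ∑ y ∈ Finset.Iic x, ∑ z ∈ Finset.Iic y, mu ℤ z y • g z = g x :=
  calc ∑ y ∈ Finset.Iic x, ∑ z ∈ Finset.Iic y, mu ℤ z y • g z
      = ∑ z ∈ Finset.Iic x, ∑ y ∈ Finset.Icc z x, mu ℤ z y • g z := by
        refine Finset.sum_comm' fun y z => ?_
        simp only [Finset.mem_Iic, Finset.mem_Icc]
        exact ⟨fun h => ⟨⟨h.2, h.1⟩, h.2.trans h.1⟩, fun h => ⟨h.1.2, h.1.1⟩⟩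
    _ = ∑ z ∈ Finset.Iic x, (if z = x then 1 else 0 : ℤ) • g z := by
        simp only [← Finset.sum_smul, sum_Icc_mu_right]
    _ = g x := by simp

theorem iInter_castSucc_inter_last {α : Type*} {q : ℕ} (s : Fin (q + 1) → Set α) :
    ⋂ k, s k = (⋂ k : Fin q, s k.castSucc) ∩ s (Fin.last q) := by
  ext x
  simp only [Set.mem_iInter, Set.mem_inter_iff, Fin.forall_fin_succ']

theorem circles_union {n : ℕ} (J L : Finset (Fin n)) :
    circles (J ∪ L) = circles J ∪ circles L := by
  ext p
  simp only [circles, Set.mem_ofPred_eq, Set.mem_union, Finset.mem_union, or_and_right,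
    exists_or]

namespace IsMeasure

variable {n : ℕ} {Fhat : Set (Atom n) → G}

theorem diff_of_subset (h : IsMeasure Fhat) {S T : Set (Atom n)} (hTS : T ⊆ S) :
    Fhat (S \ T) = Fhat S - Fhat T := by
  rw [eq_sub_iff_add_eq, ← h _ _ Set.disjoint_sdiff_left, Set.sdiff_union_of_subset hTS]

theorem diff_sub_diff_union (h : IsMeasure Fhat) (B C D : Set (Atom n)) :
    Fhat (B \ C) - Fhat (B \ (C ∪ D)) = Fhat ((B ∩ D) \ C) := by
  rw [← h.diff_of_subset (Set.sdiff_subset_sdiff_right Set.subset_union_left)]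
  congr 1
  ext p
  simp only [Set.mem_sdiff, Set.mem_union, Set.mem_inter_iff]
  tauto

theorem circles_diff (h : IsMeasure Fhat) (J L : Finset (Fin n)) :
    Fhat (circles L \ circles J) = Fhat (circles (J ∪ L)) - Fhat (circles J) := by
  rw [circles_union, ← h.diff_of_subset Set.subset_union_left, Set.union_sdiff_left]

end IsMeasure

open Classical in
/-- The measure giving mass `w I` to the atom `p_I`. -/
noncomputable def atomMeasure {n : ℕ} (w : Finset (Fin n) → G) (S : Set (Atom n)) : G :=
  ∑ I, ((fun p : Atom n => p.1) '' S).indicator w I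

theorem isMeasure_atomMeasure {n : ℕ} (w : Finset (Fin n) → G) : IsMeasure (atomMeasure w) := by
  intro S T hST
  have hdisj : Disjoint ((fun p : Atom n => p.1) '' S) ((fun p : Atom n => p.1) '' T) :=
    (Set.disjoint_image_iff Subtype.val_injective).mpr hST
  simp only [atomMeasure, Set.image_union, Set.indicator_union_of_disjoint hdisj,
    Finset.sum_add_distrib]

theorem atomMeasure_circles {n : ℕ} (w : Finset (Fin n) → G) (K : Finset (Fin n)) :
    atomMeasure w (circles K) = ∑ I, w I - ∑ I ∈ Kᶜ.powerset, w I := by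
  have himage : (fun p : Atom n => p.1) '' circles K = (↑(Kᶜ.powerset))ᶜ := by
    ext I
    simp only [circles, Set.mem_image, Set.mem_ofPred_eq, Set.mem_compl_iff, Finset.mem_coe,
      Finset.mem_powerset]
    constructor
    · rintro ⟨p, ⟨i, hiK, hip⟩, rfl⟩ hsub
      exact Finset.mem_compl.mp (hsub hip) hiK
    · intro hI
      obtain ⟨i, hiI, hiK⟩ := Finset.not_subset.mp hI
      exact ⟨⟨I, i, hiI⟩, ⟨i, Finset.notMem_compl.mp hiK, hiI⟩, rfl⟩
  rw [atomMeasure, himage, Set.indicator_compl]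
  simp only [Pi.sub_apply]
  rw [Finset.sum_sub_distrib, Finset.sum_indicator_subset _ (Finset.subset_univ _)]

open IncidenceAlgebra in
theorem exists_isMeasure_circles_eq {n : ℕ} (φ : Finset (Fin n) → G) (hφ : φ ∅ = 0) :
    ∃ Fhat : Set (Atom n) → G, IsMeasure Fhat ∧ ∀ K, Fhat (circles K) = φ K := by
  -- `ψ T` becomes the mass of the atoms `p_I` with `I ⊆ T`; `Σ_K` is the complement of those
  -- with `I ⊆ Kᶜ`.
  set ψ : Finset (Fin n) → G := fun T => -φ Tᶜ
  refine ⟨atomMeasure fun I => ∑ K ∈ Finset.Iic I, mu ℤ K I • ψ K, isMeasure_atomMeasure _,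
    fun K => ?_⟩
  rw [atomMeasure_circles, ← Finset.powerset_univ, ← Finset.Iic_eq_powerset,
    ← Finset.Iic_eq_powerset, sum_Iic_sum_Iic_mu_smul, sum_Iic_sum_Iic_mu_smul]
  simp [ψ, hφ]

theorem act_Fof_ofFn_eq_of_circles (hidem : ∀ x : M, x * x = x) {A : MAction M G} {F : M → G}
    (hF : ChainRule A F) {n : ℕ} (X : Fin n → M) {Fhat : Set (Atom n) → G}
    (hμ : IsMeasure Fhat) (hcirc : ∀ K, Fhat (circles K) = F (∏ i ∈ K, X i)) (q : ℕ) :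
    ∀ (J : Finset (Fin n)) (L : Fin (q + 1) → Finset (Fin n)),
      A.act (∏ j ∈ J, X j) (Fof A F (List.ofFn fun k => ∏ i ∈ L k, X i)) =
        Fhat ((⋂ k, circles (L k)) \ circles J) := by
  induction q with
  | zero =>
    intro J L
    have hL : ⋂ k, circles (L k) = circles (L 0) := by
      ext p
      simp [Fin.forall_fin_one]
    rw [hL, hμ.circles_diff]
    simp only [List.ofFn_succ, List.ofFn_zero, Fof_singleton]
    rw [hcirc, hcirc, ← prod_mul_prod_of_idempotent hidem, hF, add_sub_cancel_left]
  | succ q ih =>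
    intro J L
    rw [List.ofFn_succ', List.concat_eq_append, Fof_append_singleton _ _ (by simp),
      MAction.act_sub, A.act_mul, prod_mul_prod_of_idempotent hidem, ih, ih, circles_union,
      hμ.diff_sub_diff_union, iInter_castSucc_inter_last fun k => circles (L k)]

/-- generalized Hu theorem. For a commutative idempotent monoid `M` acting
additively on an abelian group `G`, a function `F : M → G` satisfying the chain rule, and
fixed `X₁, …, X_n ∈ M`, there exists a `G`-valued measure `F̂` on the set of atoms such that
the Hu identity `X_J.F_q(X_{L₁}; …; X_{L_q}) = F̂(⋂ₖ Σ_{Lₖ} ∖ Σ_J)` holds for all `q ≥ 1`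
and all `J, L₁, …, L_q ⊆ [n]`. -/
theorem generalized_hu_theorem
    {M G : Type*} [CommMonoid M] [AddCommGroup G]
    (hidem : ∀ x : M, x * x = x)
    (A : MAction M G) (F : M → G) (hF : ChainRule A F)
    (n : ℕ) (X : Fin n → M) :
    ∃ Fhat : Set (Atom n) → G, IsMeasure Fhat ∧ HuIdentity A F X Fhat := by
  obtain ⟨Fhat, hμ, hcirc⟩ := exists_isMeasure_circles_eq (fun K => F (∏ i ∈ K, X i))
    (by rw [Finset.prod_empty, hF.map_one])
  refine ⟨Fhat, hμ, fun q hq J L => ?_⟩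
  obtain ⟨q, rfl⟩ := Nat.exists_eq_add_of_le' hq
  exact act_Fof_ofFn_eq_of_circles hidem hF X hμ hcirc q J L

end AMRF
end

section
/- Let M be a commutative idempotent monoid acting additively on an abelian group G, F : M → G a function satisfying the chain rule, X_1, …, X_n ∈ M fixed, and F̂ : 2^Σ → G a G-valued measure satisfying the Hu identity for X_1, …, X_n. Then for every subset A ⊆ Σ and every atom p_I ∈ A one has F̂({p_I}) = Σ_{K ⊆ I} (−1)^{|I|−|K|} · (X_{[n]∖K}.F̂(A)) (integer multiples taken in the abelian group G). In particular, if F̂(A) = 0 then F̂({p_I}) = 0 for every atom p_I ∈ A, and consequently F̂(B) = 0 for every B ⊆ A. -/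
namespace AMRF
variable {M G : Type*} [CommMonoid M] [AddCommGroup G]

/-! The Hu identity applied to the singletons `X_{i}`, `i ∈ I`, says that for some `g`,
`X_J.g = F̂{p_R : I ⊆ R, R ∩ J = ∅}` for every `J`; taking `J = [n] ∖ I` gives `F̂{p_I}`, and
idempotence of `M` then shows that `X_J` fixes `F̂{p_I}` when `I ∩ J = ∅` and kills it otherwise.
Hence `X_{[n]∖K}.F̂(S) = Σ_{p_R ∈ S, R ⊆ K} F̂{p_R}`, and Möbius inversion on the Boolean lattice
of subsets of `I` recovers `F̂{p_I}`. -/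

instance {n : ℕ} : Finite (Atom n) :=
  inferInstanceAs (Finite {I : Finset (Fin n) // I.Nonempty})

lemma MAction.act_zero (A : MAction M G) (x : M) : A.act x 0 = 0 :=
  map_zero (AddMonoidHom.mk' (A.act x) (A.act_add x))

lemma MAction.act_sum (A : MAction M G) (x : M) {ι : Type*} (s : Finset ι) (f : ι → G) :
    A.act x (∑ i ∈ s, f i) = ∑ i ∈ s, A.act x (f i) :=
  map_sum (AddMonoidHom.mk' (A.act x) (A.act_add x)) f s

lemma prod_mul_prod_eq_prod_union_of_idem {ι : Type*} [DecidableEq ι]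
    (hidem : ∀ x : M, x * x = x) (X : ι → M) (J K : Finset ι) :
    (∏ j ∈ J, X j) * ∏ j ∈ K, X j = ∏ j ∈ J ∪ K, X j := by
  rw [← Finset.prod_union_inter, ← Finset.prod_sdiff (Finset.inter_subset_union : J ∩ K ⊆ J ∪ K),
    mul_assoc, ← Finset.prod_mul_distrib]
  simp only [hidem]

lemma sum_Icc_neg_one_pow_card_sub {α : Type*} [DecidableEq α] (R I : Finset α) :
    ∑ K ∈ Finset.Icc R I, (-1 : ℤ) ^ (I.card - K.card) = if R = I then 1 else 0 := by
  by_cases hRI : R ⊆ I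
  · have hcompl : ∑ K ∈ Finset.Icc R I, (-1 : ℤ) ^ (I.card - K.card) =
        ∑ D ∈ (I \ R).powerset, (-1 : ℤ) ^ D.card := by
      refine Finset.sum_nbij' (I \ ·) (I \ ·) ?_ ?_ ?_ ?_ ?_ <;>
        intro K hK <;> simp only [Finset.mem_Icc, Finset.mem_powerset] at hK
      · exact Finset.mem_powerset.2 (Finset.sdiff_subset_sdiff le_rfl hK.1)
      · exact Finset.mem_Icc.2 ⟨Finset.subset_sdiff.2 ⟨hRI,
          Finset.disjoint_of_subset_right hK Finset.disjoint_sdiff⟩, Finset.sdiff_subset⟩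
      · exact Finset.sdiff_sdiff_eq_self hK.2
      · exact Finset.sdiff_sdiff_eq_self (hK.trans Finset.sdiff_subset)
      · rw [Finset.card_sdiff_of_subset hK.2]
    have hempty : I \ R = ∅ ↔ R = I :=
      Finset.sdiff_eq_empty_iff_subset.trans ⟨hRI.antisymm, fun h => h ▸ subset_rfl⟩
    rw [hcompl, Finset.sum_powerset_neg_one_pow_card]
    exact if_congr hempty rfl rfl
  · rw [Finset.Icc_eq_empty hRI, Finset.sum_empty, if_neg (fun h : R = I => hRI (h ▸ subset_rfl))]

lemma sum_powerset_neg_one_pow_smul_sum_subset {α ι : Type*} [DecidableEq α]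
    (T : Finset ι) (s : ι → Finset α) (f : ι → G) (I : Finset α) :
    ∑ K ∈ I.powerset, (-1 : ℤ) ^ (I.card - K.card) • ∑ r ∈ T with s r ⊆ K, f r =
      ∑ r ∈ T with s r = I, f r := by
  simp_rw [Finset.sum_filter, Finset.smul_sum]
  rw [Finset.sum_comm]
  refine Finset.sum_congr rfl fun r _ => ?_
  calc ∑ K ∈ I.powerset, (-1 : ℤ) ^ (I.card - K.card) • (if s r ⊆ K then f r else 0)
      = (∑ K ∈ Finset.Icc (s r) I, (-1 : ℤ) ^ (I.card - K.card)) • f r := by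
        rw [Finset.Icc_eq_filter_powerset, Finset.sum_filter, Finset.sum_smul]
        exact Finset.sum_congr rfl fun K _ => by split_ifs <;> simp
    _ = if s r = I then f r else 0 := by
        rw [sum_Icc_neg_one_pow_card_sub]; split_ifs <;> simp

section Atoms

variable {n : ℕ}

lemma mem_circles {L : Finset (Fin n)} {r : Atom n} : r ∈ circles L ↔ ¬Disjoint L r.1 :=
  Finset.not_disjoint_iff.symm

lemma IsMeasure.empty {Fhat : Set (Atom n) → G} (hmeas : IsMeasure Fhat) : Fhat ∅ = 0 := by
  simpa using hmeas ∅ ∅ disjoint_bot_left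

lemma IsMeasure.eq_sum_singleton {Fhat : Set (Atom n) → G} (hmeas : IsMeasure Fhat)
    (T : Finset (Atom n)) : Fhat ↑T = ∑ p ∈ T, Fhat {p} := by
  classical
  induction T using Finset.induction_on with
  | empty => simpa using hmeas.empty
  | insert a T ha ih =>
    rw [Finset.coe_insert, Set.insert_eq, hmeas _ _ (by simpa using ha), ih,
      Finset.sum_insert ha]

variable {A : MAction M G} {F : M → G} {X : Fin n → M} {Fhat : Set (Atom n) → G}

/-- The witness is the interaction term `F_{|I|}(X_{i₁}; …; X_{i_{|I|}})` of the elements of `I`. -/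
lemma HuIdentity.exists_act_eq (hHu : HuIdentity A F X Fhat) {I : Finset (Fin n)}
    (hI : I.Nonempty) :
    ∃ g : G, ∀ J, A.act (∏ j ∈ J, X j) g = Fhat {r | I ⊆ r.1 ∧ Disjoint r.1 J} := by
  let e := I.equivFin
  refine ⟨_, fun J => (hHu I.card (Finset.card_pos.2 hI) J fun k => {(e.symm k : Fin n)}).trans
    (congrArg Fhat ?_)⟩
  ext r
  simp only [Set.mem_sdiff, Set.mem_iInter, mem_circles, Finset.disjoint_singleton_left, not_not,
    Set.mem_ofPred_eq, disjoint_comm (a := J)]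
  exact and_congr_left'
    ((e.symm.forall_congr_right (q := fun i : I => (i : Fin n) ∈ r.1)).trans Subtype.forall)

lemma act_measure_singleton (hidem : ∀ x : M, x * x = x) (hmeas : IsMeasure Fhat)
    (hHu : HuIdentity A F X Fhat) (p : Atom n) (J : Finset (Fin n)) :
    A.act (∏ j ∈ J, X j) (Fhat {p}) = if Disjoint p.1 J then Fhat {p} else 0 := by
  obtain ⟨g, hg⟩ := hHu.exists_act_eq p.2
  have hsupport : ∀ J' : Finset (Fin n), {r : Atom n | p.1 ⊆ r.1 ∧ Disjoint r.1 (J' ∪ p.1ᶜ)} =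
      if Disjoint p.1 J' then {p} else ∅ := by
    intro J'
    ext r
    have hiff : p.1 ⊆ r.1 ∧ Disjoint r.1 J' ∧ r.1 ⊆ p.1 ↔ r = p ∧ Disjoint p.1 J' := by
      constructor
      · rintro ⟨hpr, hrJ, hrp⟩
        obtain rfl : r = p := Subtype.ext (hrp.antisymm hpr)
        exact ⟨rfl, hrJ⟩
      · rintro ⟨rfl, hpJ⟩
        exact ⟨le_rfl, hpJ, le_rfl⟩
    simp only [Set.mem_ofPred_eq, Finset.disjoint_union_right, disjoint_compl_right_iff, hiff]
    split_ifs with hpJ <;> simp [hpJ]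
  calc A.act (∏ j ∈ J, X j) (Fhat {p})
      = A.act (∏ j ∈ J, X j) (A.act (∏ j ∈ p.1ᶜ, X j) g) := by
        rw [hg, ← Finset.empty_union p.1ᶜ, hsupport, if_pos (Finset.disjoint_empty_right _)]
    _ = Fhat (if Disjoint p.1 J then {p} else ∅) := by
        rw [A.act_mul, prod_mul_prod_eq_prod_union_of_idem hidem, hg, hsupport]
    _ = if Disjoint p.1 J then Fhat {p} else 0 := by
        split_ifs
        · rfl
        · exact hmeas.empty

lemma act_prod_compl_measure (hidem : ∀ x : M, x * x = x) (hmeas : IsMeasure Fhat)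
    (hHu : HuIdentity A F X Fhat) (T : Finset (Atom n)) (K : Finset (Fin n)) :
    A.act (∏ i ∈ Finset.univ \ K, X i) (Fhat ↑T) = ∑ r ∈ T with r.1 ⊆ K, Fhat {r} := by
  rw [hmeas.eq_sum_singleton, A.act_sum, Finset.sum_filter, ← Finset.compl_eq_univ_sdiff]
  simp only [act_measure_singleton hidem hmeas hHu, disjoint_compl_right_iff]

end Atoms

theorem subset_determination_general
    {M G : Type*} [CommMonoid M] [AddCommGroup G]
    (hidem : ∀ x : M, x * x = x)
    (A : MAction M G) (F : M → G)
    (n : ℕ) (X : Fin n → M)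
    (Fhat : Set (Atom n) → G) (hmeas : IsMeasure Fhat) (hHu : HuIdentity A F X Fhat) :
    (∀ (S : Set (Atom n)) (p : Atom n), p ∈ S →
      Fhat {p} =
        ∑ K ∈ p.1.powerset,
          (-1 : ℤ) ^ (p.1.card - K.card) • A.act (∏ i ∈ Finset.univ \ K, X i) (Fhat S)) ∧
    (∀ S : Set (Atom n), Fhat S = 0 →
      (∀ p ∈ S, Fhat {p} = 0) ∧ ∀ B ⊆ S, Fhat B = 0) := by
  classical
  have inversion : ∀ (S : Set (Atom n)) (p : Atom n), p ∈ S →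
      Fhat {p} = ∑ K ∈ p.1.powerset,
        (-1 : ℤ) ^ (p.1.card - K.card) • A.act (∏ i ∈ Finset.univ \ K, X i) (Fhat S) := by
    intro S p hp
    obtain ⟨T, rfl⟩ := S.toFinite.exists_finset_coe
    have hfiber : {r ∈ T | r.1 = p.1} = {p} := by
      ext r
      rw [Finset.mem_filter, Finset.mem_singleton]
      exact ⟨fun h => Subtype.ext h.2, fun h => ⟨h ▸ Finset.mem_coe.1 hp, h ▸ rfl⟩⟩
    simp_rw [act_prod_compl_measure hidem hmeas hHu, sum_powerset_neg_one_pow_smul_sum_subset,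
      hfiber, Finset.sum_singleton]
  refine ⟨inversion, fun S hS => ?_⟩
  have hsingleton : ∀ p ∈ S, Fhat {p} = 0 := fun p hp => by
    simp [inversion S p hp, hS, A.act_zero]
  refine ⟨hsingleton, fun B hB => ?_⟩
  obtain ⟨T, rfl⟩ := B.toFinite.exists_finset_coe
  rw [hmeas.eq_sum_singleton]
  exact Finset.sum_eq_zero fun r hr => hsingleton r (hB hr)

/-- subset determination. If `F̂` is a `G`-valued measure on atoms
satisfying the Hu identity for `X₁, …, X_n`, then for every set `S` of atoms and every atom
`p_I ∈ S`, `F̂({p_I}) = Σ_{K ⊆ I} (−1)^{|I|−|K|} · (X_{[n]∖K}.F̂(S))`.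
In particular, if `F̂(S) = 0` then `F̂({p_I}) = 0` for every atom `p_I ∈ S`, and
consequently `F̂(B) = 0` for every `B ⊆ S`. -/
theorem subset_determination
    {M G : Type*} [CommMonoid M] [AddCommGroup G]
    (hidem : ∀ x : M, x * x = x)
    (A : MAction M G) (F : M → G) (hF : ChainRule A F)
    (n : ℕ) (X : Fin n → M)
    (Fhat : Set (Atom n) → G) (hmeas : IsMeasure Fhat) (hHu : HuIdentity A F X Fhat) :
    (∀ (S : Set (Atom n)) (p : Atom n), p ∈ S →
      Fhat {p} =
        ∑ K ∈ p.1.powerset,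
          (-1 : ℤ) ^ (p.1.card - K.card) • A.act (∏ i ∈ Finset.univ \ K, X i) (Fhat S)) ∧
    (∀ S : Set (Atom n), Fhat S = 0 →
      (∀ p ∈ S, Fhat {p} = 0) ∧ ∀ B ⊆ S, Fhat B = 0) :=
  subset_determination_general hidem A F n X Fhat hmeas hHu

end AMRF
end

section
/- Let M be a commutative idempotent monoid acting additively on an abelian group G, F : M → G a function satisfying the chain rule, X_1, …, X_n ∈ M fixed, and F̂ : 2^Σ → G a G-valued measure satisfying the Hu identity for X_1, …, X_n. Then for every atom p_L ∈ Σ and every K ⊆ [n]: X_{[n]∖K}.F̂({p_L}) = F̂({p_L}) if L ⊆ K, and X_{[n]∖K}.F̂({p_L}) = 0 otherwise. -/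
namespace AMRF
variable {M G : Type*} [CommMonoid M] [AddCommGroup G]

/-- If `F̂` is a `G`-valued measure on atoms satisfying the Hu identity for
`X₁, …, X_n`, then for every atom `p_L` and every `K ⊆ [n]`:
`X_{[n]∖K}.F̂({p_L}) = F̂({p_L})` if `L ⊆ K`, and `X_{[n]∖K}.F̂({p_L}) = 0` otherwise. -/
theorem atoms_annihilated
    {M G : Type*} [CommMonoid M] [AddCommGroup G]
    (hidem : ∀ x : M, x * x = x)
    (A : MAction M G) (F : M → G) (hF : ChainRule A F)
    (n : ℕ) (X : Fin n → M)
    (Fhat : Set (Atom n) → G) (hmeas : IsMeasure Fhat) (hHu : HuIdentity A F X Fhat)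
    (p : Atom n) (K : Finset (Fin n)) :
    A.act (∏ i ∈ Finset.univ \ K, X i) (Fhat {p}) =
      if p.1 ⊆ K then Fhat {p} else 0 := by
  classical
  -- idempotent product facts
  have prod_sq : ∀ s : Finset (Fin n), (∏ i ∈ s, X i) * ∏ i ∈ s, X i = ∏ i ∈ s, X i := by
    intro s
    rw [← Finset.prod_mul_distrib]
    exact Finset.prod_congr rfl fun i _ => hidem _
  have absorb : ∀ s t : Finset (Fin n), t ⊆ s →
      (∏ i ∈ s, X i) * ∏ i ∈ t, X i = ∏ i ∈ s, X i := by
    intro s t h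
    rw [← Finset.prod_sdiff h, mul_assoc, prod_sq]
  have prod_union : ∀ s t : Finset (Fin n),
      (∏ i ∈ s, X i) * ∏ i ∈ t, X i = ∏ i ∈ s ∪ t, X i := by
    intro s t
    rw [← Finset.prod_union_inter, absorb _ _ (Finset.inter_subset_union)]
  -- Fhat of empty set is 0
  have hFhat0 : Fhat ∅ = 0 := by
    have := hmeas ∅ ∅ (by simp)
    simpa using this
  set L : Finset (Fin n) := p.1 with hLdef
  have hLne : L.Nonempty := p.2
  set q : ℕ := L.card with hqdef
  have hq : 1 ≤ q := Finset.card_pos.mpr hLne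
  set emb := L.orderEmbOfFin (rfl : L.card = q) with hembdef
  have hmem : ∀ k : Fin q, emb k ∈ L := fun k => Finset.orderEmbOfFin_mem L rfl k
  have hsurj : ∀ i ∈ L, ∃ k : Fin q, emb k = i := by
    intro i hi
    have : (i : Fin n) ∈ Set.range emb := by
      rw [hembdef, Finset.range_orderEmbOfFin]; exact hi
    exact this
  set Ls : Fin q → Finset (Fin n) := fun k => {emb k} with hLsdef
  -- the intersection of circles of the Ls
  have hInter : (⋂ k : Fin q, circles (Ls k)) = {p' : Atom n | L ⊆ p'.1} := by
    ext p'
    simp only [Set.mem_iInter, circles, Set.mem_setOf_eq, hLsdef, Finset.mem_singleton]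
    constructor
    · intro h i hi
      obtain ⟨k, hk⟩ := hsurj i hi
      obtain ⟨j, hj, hjp⟩ := h k
      rwa [hj, hk] at hjp
    · intro h k
      exact ⟨emb k, rfl, h (hmem k)⟩
  set v : G := Fof A F (List.ofFn fun k => ∏ i ∈ Ls k, X i) with hvdef
  -- First Hu application: Fhat {p} = act X_{univ \ L} v
  have hS1 : ((⋂ k : Fin q, circles (Ls k)) \ circles (Finset.univ \ L)) = {p} := by
    rw [hInter]
    ext p'
    simp only [Set.mem_diff, Set.mem_setOf_eq, circles, Set.mem_singleton_iff]
    constructor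
    · rintro ⟨h1, h2⟩
      have hsub : p'.1 ⊆ L := by
        intro i hi
        by_contra hiL
        exact h2 ⟨i, by simp [hiL], hi⟩
      exact Subtype.ext (Finset.Subset.antisymm hsub h1)
    · rintro rfl
      refine ⟨Finset.Subset.refl _, ?_⟩
      rintro ⟨i, hi, hip⟩
      simp only [Finset.mem_sdiff, Finset.mem_univ, true_and] at hi
      exact hi hip
  have Hu1 := hHu q hq (Finset.univ \ L) Ls
  rw [hS1] at Hu1
  -- Second Hu application
  set J2 : Finset (Fin n) := (Finset.univ \ K) ∪ (Finset.univ \ L) with hJ2def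
  have Hu2 := hHu q hq J2 Ls
  -- rewrite LHS
  have hLHS : A.act (∏ i ∈ Finset.univ \ K, X i) (Fhat {p}) =
      Fhat ((⋂ k : Fin q, circles (Ls k)) \ circles J2) := by
    rw [← Hu1, A.act_mul, prod_union, ← hJ2def] at *
    exact Hu2
  rw [hLHS]
  by_cases hLK : p.1 ⊆ K
  · rw [if_pos hLK]
    congr 1
    rw [hInter]
    ext p'
    simp only [Set.mem_diff, Set.mem_setOf_eq, circles, Set.mem_singleton_iff]
    constructor
    · rintro ⟨h1, h2⟩
      have hsub : p'.1 ⊆ L := by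
        intro i hi
        by_contra hiL
        exact h2 ⟨i, by simp [hJ2def, hiL], hi⟩
      exact Subtype.ext (Finset.Subset.antisymm hsub h1)
    · rintro rfl
      refine ⟨Finset.Subset.refl _, ?_⟩
      rintro ⟨i, hi, hip⟩
      simp only [hJ2def, Finset.mem_union, Finset.mem_sdiff, Finset.mem_univ, true_and] at hi
      rcases hi with hi | hi
      · exact hi (hLK hip)
      · exact hi hip
  · rw [if_neg hLK]
    have hempty : ((⋂ k : Fin q, circles (Ls k)) \ circles J2) = ∅ := by
      rw [hInter]
      ext p'
      simp only [Set.mem_diff, Set.mem_setOf_eq, Set.mem_empty_iff_false, iff_false, not_and,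
        not_not]
      intro h1
      by_contra h2
      apply hLK
      intro i hi
      by_contra hiK
      exact h2 ⟨i, by simp [hJ2def, hiK], h1 hi⟩
    rw [hempty, hFhat0]

end AMRF
end

section
/- Let M be a commutative idempotent monoid acting additively on an abelian group G, and let F : M → G satisfy the chain rule. Define the F-independence relation ⊥_F on M by X ⊥_F Y | Z iff Z.F(X; Y) = 0. Then (M, ⊥_F) is a separoid, i.e. ⊥_F satisfies the separoid axioms (S1)–(S5). -/
namespace AMRF
variable {M G : Type*} [CommMonoid M] [AddCommGroup G]

/-- For a commutative idempotent monoid `M` acting additively on an abelian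
group `G` and `F : M → G` satisfying the chain rule, the `F`-independence relation
`X ⊥_F Y | Z ↔ Z.F(X; Y) = 0` makes `(M, ⊥_F)` a separoid. -/
theorem F_independence_is_separoid
    {M G : Type*} [CommMonoid M] [AddCommGroup G]
    (hidem : ∀ x : M, x * x = x)
    (A : MAction M G) (F : M → G) (hF : ChainRule A F) :
    IsSeparoid (fun X Y Z => Findep A F X Y Z) := by
  have actzero : ∀ X : M, A.act X (0 : G) = 0 := by
    intro X
    have h := A.act_add X 0 0
    rw [add_zero] at h
    exact (add_eq_left.mp h.symm)
  have actsub : ∀ (X : M) (g h : G), A.act X (g - h) = A.act X g - A.act X h := by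
    intro X g h
    have h1 := A.act_add X (g - h) h
    rw [sub_add_cancel] at h1
    rw [eq_sub_iff_add_eq, ← h1]
  have actcomm : ∀ (X Y : M) (g : G), A.act X (A.act Y g) = A.act Y (A.act X g) := by
    intro X Y g
    rw [A.act_mul, A.act_mul, mul_comm]
  have selfact : ∀ X : M, A.act X (F X) = 0 := by
    intro X
    have h := hF X X
    rw [hidem X] at h
    exact (add_eq_left.mp h.symm)
  -- second-order term
  set D : M → M → G := fun X Y => F X - A.act Y (F X) with hD
  have keyX : ∀ X Y : M, A.act X (D X Y) = 0 := by
    intro X Y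
    simp only [hD, actsub, selfact, actcomm X Y, actzero, sub_zero]
  have sym : ∀ X Y : M, D X Y = D Y X := by
    intro X Y
    have h1 := hF X Y
    have h2 := hF Y X
    rw [mul_comm Y X] at h2
    rw [h2] at h1
    simp only [hD]
    rw [sub_eq_sub_iff_add_eq_add]
    exact h1.symm
  have expand : ∀ W X Y : M, D (W * X) Y = D X Y + A.act X (D W Y) := by
    intro W X Y
    have h := hF X W
    rw [mul_comm X W] at h
    simp only [hD, h, A.act_add, actsub, actcomm Y X]
    abel
  have findep_eq : ∀ X Y Z : M, Findep A F X Y Z ↔ A.act Z (D X Y) = 0 := by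
    intro X Y Z
    simp only [hD, Findep]
  -- key consequence used in S3/S4: from Z.D(WX,Y)=0 we get Z.(X.D(W,Y))=0
  have step : ∀ W X Y Z : M, A.act Z (D (W * X) Y) = 0 →
      A.act Z (A.act X (D W Y)) = 0 := by
    intro W X Y Z h
    rw [expand, A.act_add] at h
    have h2 := congrArg (A.act X) h
    simp only [A.act_add, actcomm X Z, A.act_mul X X, hidem X, keyX, actzero,
      zero_add] at h2
    exact h2
  refine ⟨?_, ?_, ?_, ?_, ?_⟩
  · -- S1 symmetry
    intro X Y Z h
    rw [findep_eq] at h ⊢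
    rw [← sym]
    exact h
  · -- S2 redundancy
    intro W Y Z hWZ
    rw [findep_eq]
    have hzw : A.act Z (F W) = 0 := by
      have h := hF Z W
      rw [mul_comm Z W, hWZ] at h
      exact (add_eq_left.mp h.symm)
    simp only [hD, actsub, hzw, actcomm Z Y, actzero, sub_zero]
  · -- S3 decomposition
    intro W X Y Z h
    rw [findep_eq] at h ⊢
    have h1 := step W X Y Z h
    rw [expand, A.act_add, h1, add_zero] at h
    exact h
  · -- S4 weak union
    intro W X Y Z h
    rw [findep_eq] at h ⊢
    have h1 := step W X Y Z h
    rw [← A.act_mul] at *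
    rw [actcomm]
    exact h1
  · -- S5 contraction
    intro W X Y Z h1 h2
    rw [findep_eq] at h1 h2 ⊢
    rw [expand, A.act_add, h2, zero_add, actcomm Z X, A.act_mul]
    exact h1

end AMRF
end

section
/- Let M be a commutative idempotent monoid acting additively on an abelian group G, F : M → G a function satisfying the chain rule, and X_1, X_2, Y ∈ M. Then the following are equivalent: (1) X_1 ⊥_F X_2 | Y; (2) Y.F(X_1X_2) = Y.F(X_1) + Y.F(X_2); (3) Y.F(X_1X_2) = (YX_2).F(X_1) + (YX_1).F(X_2); (4) Y.F(X_1) = (YX_2).F(X_1); (5) Y.F(X_2) = (YX_1).F(X_2). -/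
namespace AMRF
variable {M G : Type*} [CommMonoid M] [AddCommGroup G]

/-- Characterizations of pairwise conditional `F`-independence
`X₁ ⊥_F X₂ | Y`. -/
theorem pairwise_F_independence_characterization
    {M G : Type*} [CommMonoid M] [AddCommGroup G]
    (hidem : ∀ x : M, x * x = x)
    (A : MAction M G) (F : M → G) (hF : ChainRule A F)
    (X₁ X₂ Y : M) :
    List.TFAE
      [ Findep A F X₁ X₂ Y,
        A.act Y (F (X₁ * X₂)) = A.act Y (F X₁) + A.act Y (F X₂),
        A.act Y (F (X₁ * X₂)) = A.act (Y * X₂) (F X₁) + A.act (Y * X₁) (F X₂),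
        A.act Y (F X₁) = A.act (Y * X₂) (F X₁),
        A.act Y (F X₂) = A.act (Y * X₁) (F X₂) ] := by
  have hsub : ∀ (X : M) (g h : G), A.act X (g - h) = A.act X g - A.act X h := by
    intro X g h
    have h1 : A.act X (g - h) + A.act X h = A.act X g := by
      rw [← A.act_add, sub_add_cancel]
    exact eq_sub_of_add_eq h1
  -- symmetric chain rule
  have hswap : F X₁ + A.act X₁ (F X₂) = F X₂ + A.act X₂ (F X₁) := by
    rw [← hF, ← hF, mul_comm]
  have hYswap : A.act Y (F X₁) + A.act (Y * X₁) (F X₂)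
      = A.act Y (F X₂) + A.act (Y * X₂) (F X₁) := by
    have := congrArg (A.act Y) hswap
    rwa [A.act_add, A.act_add, A.act_mul, A.act_mul] at this
  have hexp : A.act Y (F (X₁ * X₂)) = A.act Y (F X₁) + A.act (Y * X₁) (F X₂) := by
    rw [hF, A.act_add, A.act_mul]
  tfae_have 1 ↔ 4 := by
    unfold Findep
    rw [hsub, A.act_mul, sub_eq_zero]
  tfae_have 4 ↔ 5 := by
    constructor
    · intro h
      have h2 := hYswap
      rw [← h, add_comm (A.act Y (F X₁))] at h2
      exact (add_right_cancel h2).symm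
    · intro h
      have h2 := hYswap
      rw [← h, add_comm (A.act Y (F X₂))] at h2
      exact add_right_cancel h2
  tfae_have 2 ↔ 5 := by
    rw [hexp]
    constructor
    · intro h; exact (add_left_cancel h).symm
    · intro h; rw [← h]
  tfae_have 3 ↔ 4 := by
    rw [hexp]
    constructor
    · intro h
      have := add_right_cancel h
      exact this
    · intro h; rw [← h]
  tfae_finish

end AMRF
end

section
/- Let M be a commutative idempotent monoid acting additively on an abelian group G, F : M → G a function satisfying the chain rule, and suppose X_1, …, X_n ∈ M form an F-Markov chain. Then for all subsets I, J ⊆ [n] with ∅ ≠ I = {i_1 < i_2 < … < i_q}, the equality X_J.F(X_{i_1}; X_{i_2}; …; X_{i_q}) = X_J.F(X_{i_1}; X_{i_q}) holds. -/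
/-!
With `T_Y g = g - Y.g` (`MAction.diff`), the operators `T_Y` commute with each other and with the action, and
`F(Y₁; …; Y_q) = T_{Y_q} ⋯ T_{Y_2} F(Y₁)`. The chain rule makes `T_Y F(X)` symmetric in `X, Y`.
The Markov property yields `X_a.T_{X_b} F(X_m) = 0` for `m ≤ a < b`: for `b = a + 1` because
`X_m` is absorbed by `X_a ∏_{k<a} X_k`, and in general because `Z.T_Y g = 0` is transitive in
`(Z, Y)`. Applying `T`'s to this, `X_c.T_{X_b} F(X_m; …) = 0` for every middle index `c`, hence
`T_{X_b} T_{X_c} h = T_{X_b} h - X_c.T_{X_b} h = T_{X_b} h` and the middle arguments drop out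
one at a time.
-/

namespace AMRF
variable {M G : Type*} [CommMonoid M] [AddCommGroup G]

/-- `X₁, …, X_n` form an `F`-Markov chain. -/
def FMarkovChain (A : MAction M G) (F : M → G) {n : ℕ} (X : Fin n → M) : Prop :=
  ∀ i j : Fin n, (j : ℕ) + 1 = (i : ℕ) →
    Findep A F (X i) (∏ k ∈ Finset.univ.filter (fun k => k < j), X k) (X j)

namespace MAction

variable (A : MAction M G)

def actHom (Y : M) : G →+ G := AddMonoidHom.mk' (A.act Y) (A.act_add Y)

lemma act_zero_s14 (Y : M) : A.act Y 0 = 0 := (A.actHom Y).map_zero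

lemma act_sub_s14 (Y : M) (g h : G) : A.act Y (g - h) = A.act Y g - A.act Y h :=
  (A.actHom Y).map_sub g h

lemma act_act_comm (Y Z : M) (g : G) : A.act Y (A.act Z g) = A.act Z (A.act Y g) := by
  rw [A.act_mul, A.act_mul, mul_comm]

def diff (Y : M) (g : G) : G := g - A.act Y g

lemma diff_zero (Y : M) : A.diff Y 0 = 0 := by
  rw [diff, act_zero_s14, sub_zero]

lemma diff_eq_self {Y : M} {g : G} (h : A.act Y g = 0) : A.diff Y g = g := by
  rw [diff, h, sub_zero]

lemma act_diff (Y Z : M) (g : G) : A.act Z (A.diff Y g) = A.diff Y (A.act Z g) := by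
  rw [diff, diff, act_sub_s14, act_act_comm]

lemma diff_diff_comm (Y Z : M) (g : G) : A.diff Y (A.diff Z g) = A.diff Z (A.diff Y g) := by
  simp only [diff, act_sub_s14, act_act_comm A Y Z]
  abel

lemma act_diff_eq_zero_iff (Y Z : M) (g : G) :
    A.act Z (A.diff Y g) = 0 ↔ A.act Z g = A.act (Z * Y) g := by
  rw [diff, act_sub_s14, A.act_mul, sub_eq_zero]

lemma act_diff_eq_zero_trans {Z Y W : M} {g : G} (hZY : A.act Z (A.diff Y g) = 0)
    (hYW : A.act Y (A.diff W g) = 0) : A.act Z (A.diff W g) = 0 := by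
  rw [act_diff_eq_zero_iff] at *
  calc A.act Z g = A.act Z (A.act Y g) := by rw [A.act_mul, hZY]
    _ = A.act Z (A.act (Y * W) g) := by rw [hYW]
    _ = A.act W (A.act (Z * Y) g) := by rw [A.act_mul, A.act_mul, mul_comm W, mul_assoc]
    _ = A.act W (A.act Z g) := by rw [← hZY]
    _ = A.act (Z * W) g := by rw [A.act_mul, mul_comm]

lemma act_diff_mul_self {Z : M} (hZ : Z * Z = Z) (Y : M) (g : G) :
    A.act Z (A.diff (Z * Y) g) = A.act Z (A.diff Y g) := by
  rw [diff, diff, act_sub_s14, act_sub_s14, A.act_mul Z (Z * Y), ← mul_assoc, hZ, A.act_mul]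

lemma act_diff_eq_zero_of_mul_eq {Z Y V : M} {g : G} (h : A.act Z (A.diff Y g) = 0)
    (hVY : V * Y = Y) : A.act Z (A.diff V g) = 0 := by
  rw [act_diff_eq_zero_iff] at *
  calc A.act Z g = A.act (Z * (V * Y)) g := by rw [hVY, h]
    _ = A.act V (A.act (Z * Y) g) := by rw [A.act_mul, mul_left_comm]
    _ = A.act V (A.act Z g) := by rw [← h]
    _ = A.act (Z * V) g := by rw [A.act_mul, mul_comm]

end MAction

namespace ChainRule

variable {A : MAction M G} {F : M → G} (hF : ChainRule A F)
include hF

lemma act_self {x : M} (hx : x * x = x) : A.act x (F x) = 0 := by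
  simpa [hx] using hF x x

lemma diff_self {x : M} (hx : x * x = x) : A.diff x (F x) = F x :=
  A.diff_eq_self (hF.act_self hx)

lemma diff_comm (x y : M) : A.diff y (F x) = A.diff x (F y) := by
  have h := hF y x
  rw [mul_comm, hF x y] at h
  exact sub_eq_sub_iff_add_eq_add.mpr h

end ChainRule

lemma Fof_pair (A : MAction M G) (F : M → G) (Y Z : M) : Fof A F [Y, Z] = A.diff Z (F Y) := rfl

lemma Fof_concat (A : MAction M G) (F : M → G) {l : List M} (hl : l ≠ []) (Y : M) :
    Fof A F (l ++ [Y]) = A.diff Y (Fof A F l) := by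
  obtain ⟨Z, l', hl'⟩ := List.exists_cons_of_ne_nil (List.reverse_ne_nil_iff.mpr hl)
  simp only [Fof, List.reverse_append, List.reverse_singleton, List.singleton_append, hl']
  rfl

lemma mul_prod_eq_of_mem {ι : Type*} (hidem : ∀ x : M, x * x = x) {s : Finset ι} {i : ι}
    (hi : i ∈ s) (X : ι → M) : X i * ∏ k ∈ s, X k = ∏ k ∈ s, X k := by
  classical
  rw [← Finset.mul_prod_erase s X hi, ← mul_assoc, hidem]

namespace FMarkovChain

variable {A : MAction M G} {F : M → G} {n : ℕ} {X : Fin n → M}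

lemma act_diff_succ (hidem : ∀ x : M, x * x = x) (hF : ChainRule A F)
    (hmc : FMarkovChain A F X) {m a b : Fin n} (hab : (a : ℕ) + 1 = b) (hm : m ≤ a) :
    A.act (X a) (A.diff (X b) (F (X m))) = 0 := by
  set P := ∏ k ∈ Finset.univ.filter (· < a), X k
  have hP : A.act (X a) (A.diff (X a * P) (F (X b))) = 0 := by
    rw [A.act_diff_mul_self (hidem _)]
    exact hmc b a hab
  have hmP : X m * (X a * P) = X a * P := by
    rcases hm.eq_or_lt with rfl | hma
    · rw [← mul_assoc, hidem]
    · rw [mul_left_comm, mul_prod_eq_of_mem hidem (by simpa using hma)]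
  rw [hF.diff_comm]
  exact A.act_diff_eq_zero_of_mul_eq hP hmP

lemma act_diff_eq_zero (hidem : ∀ x : M, x * x = x) (hF : ChainRule A F)
    (hmc : FMarkovChain A F X) {m a b : Fin n} (hab : a < b) (hm : m ≤ a) :
    A.act (X a) (A.diff (X b) (F (X m))) = 0 := by
  obtain ⟨d, hd⟩ : ∃ d, (b : ℕ) = a + 1 + d := ⟨b - (a + 1), by omega⟩
  clear hab
  induction d generalizing b with
  | zero => exact hmc.act_diff_succ hidem hF hd.symm hm
  | succ d ih =>
    let b' : Fin n := ⟨a + 1 + d, by omega⟩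
    have hab' : a < b' := Fin.lt_def.mpr (by simp only [b']; omega)
    exact A.act_diff_eq_zero_trans (ih rfl)
      (hmc.act_diff_succ hidem hF (by simp only [b']; omega) (hm.trans hab'.le))

lemma act_diff_Fof_eq_zero (hidem : ∀ x : M, x * x = x) (hF : ChainRule A F)
    (hmc : FMarkovChain A F X) {m a b : Fin n} (hab : a < b) (hm : m ≤ a) (l : List M) :
    A.act (X a) (A.diff (X b) (Fof A F (X m :: l))) = 0 := by
  induction l using List.reverseRecOn with
  | nil => exact hmc.act_diff_eq_zero hidem hF hab hm
  | append_singleton l Y ih =>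
    rw [← List.cons_append, Fof_concat A F (List.cons_ne_nil _ _), A.diff_diff_comm, A.act_diff,
      ih, A.diff_zero]

lemma diff_Fof_eq (hidem : ∀ x : M, x * x = x) (hF : ChainRule A F)
    (hmc : FMarkovChain A F X) {m b : Fin n} (l : List (Fin n)) (hl : ∀ c ∈ l, m ≤ c ∧ c < b) :
    A.diff (X b) (Fof A F (X m :: l.map X)) = A.diff (X b) (F (X m)) := by
  induction l using List.reverseRecOn with
  | nil => rfl
  | append_singleton l c ih =>
    have hc := hl c (by simp)
    rw [List.map_append, List.map_singleton, ← List.cons_append,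
      Fof_concat A F (List.cons_ne_nil _ _), A.diff_diff_comm,
      A.diff_eq_self (hmc.act_diff_Fof_eq_zero hidem hF hc.2 hc.1 _),
      ih (fun d hd => hl d (by simp [hd]))]

lemma Fof_map_eq_Fof_head_getLast (hidem : ∀ x : M, x * x = x) (hF : ChainRule A F)
    (hmc : FMarkovChain A F X) {l : List (Fin n)} (hs : l.Pairwise (· < ·)) (hl : l ≠ []) :
    Fof A F (l.map X) = Fof A F [X (l.head hl), X (l.getLast hl)] := by
  obtain ⟨m, t, rfl⟩ := List.exists_cons_of_ne_nil hl
  rcases t.eq_nil_or_concat' with rfl | ⟨t, b, rfl⟩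
  · rw [Fof_pair, List.head_cons, List.getLast_singleton, hF.diff_self (hidem _)]
    rfl
  · have hmid : ∀ c ∈ t, m ≤ c ∧ c < b := by
      simp only [List.pairwise_cons, List.pairwise_append] at hs
      exact fun c hc => ⟨(hs.1 c (by simp [hc])).le, hs.2.2.2 c hc b (by simp)⟩
    rw [List.map_cons, List.map_append, List.map_singleton, ← List.cons_append,
      Fof_concat A F (List.cons_ne_nil _ _), hmc.diff_Fof_eq hidem hF t hmid, Fof_pair]
    simp

end FMarkovChain

/-- If `X₁, …, X_n` form an `F`-Markov chain, then for all `I, J ⊆ [n]`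
with `I = {i₁ < i₂ < … < i_q}` nonempty,
`X_J.F(X_{i₁}; X_{i₂}; …; X_{i_q}) = X_J.F(X_{i₁}; X_{i_q})`. -/
theorem markov_chain_interaction_terms
    {M G : Type*} [CommMonoid M] [AddCommGroup G]
    (hidem : ∀ x : M, x * x = x)
    (A : MAction M G) (F : M → G) (hF : ChainRule A F)
    (n : ℕ) (X : Fin n → M) (hmc : FMarkovChain A F X)
    (I J : Finset (Fin n)) (hI : I.Nonempty) :
    A.act (∏ j ∈ J, X j) (Fint A F X I) =
      A.act (∏ j ∈ J, X j) (Fof A F [X (I.min' hI), X (I.max' hI)]) := by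
  have hsort : I.sort (· ≤ ·) ≠ [] := by
    rw [Ne, ← List.length_eq_zero_iff, Finset.length_sort]
    exact hI.card_pos.ne'
  congr 1
  rw [Fint, hmc.Fof_map_eq_Fof_head_getLast hidem hF I.sortedLT_sort.pairwise hsort,
    Finset.min'_eq_sorted_zero, Finset.max'_eq_sorted_last, List.head_eq_getElem,
    List.getLast_eq_getElem]

end AMRF
end
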